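/- arXiv:1604.06527 — 2 statements merged into one kernel-verified Lean document; each statement's English description precedes it below -/
import Mathlib

section
/- Let L be a real Lie algebra equipped with a symmetric invariant bilinear form B which is positive definite (B(x,x) > 0 for every nonzero x ∈ L). Then every Lie algebra homomorphism φ : sl(2,ℝ) → L is zero. -/
/-!
If `⁅h, e⁆ = c • e` with `c ≠ 0`, invariance gives `c * B e e = B ⁅h, e⁆ e = B h ⁅e, e⁆ = 0`, so
`e = 0` for an anisotropic invariant form. In `sl₂` the elements `E` and `F` are such eigenvectors
of `ad H`, and `H = ⁅E, F⁆`; hence a Lie homomorphism into `L` kills the basis `E, F, H`.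
-/

theorem eq_zero_of_lie_eq_smul_of_anisotropic {K L : Type*} [Field K] [LieRing L] [LieAlgebra K L]
    (B : LinearMap.BilinForm K L) (hinv : ∀ x y z, B ⁅x, y⁆ z = B x ⁅y, z⁆)
    (haniso : ∀ x, B x x = 0 → x = 0) {h e : L} {c : K} (hc : c ≠ 0) (hhe : ⁅h, e⁆ = c • e) :
    e = 0 := by
  have hce : c * B e e = 0 := calc
    c * B e e = B ⁅h, e⁆ e := by rw [hhe, map_smul, LinearMap.smul_apply, smul_eq_mul]
    _ = B h ⁅e, e⁆ := hinv h e e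
    _ = 0 := by rw [lie_self, map_zero]
  exact haniso e ((mul_eq_zero.mp hce).resolve_left hc)

namespace LieAlgebra.SpecialLinear

variable (R : Type*) [CommRing R]

def sl2E : sl (Fin 2) R := single 0 1 (by decide) 1

def sl2F : sl (Fin 2) R := single 1 0 (by decide) 1

def sl2H : sl (Fin 2) R := singleSubSingle 0 1 1

lemma lie_sl2H_sl2E : ⁅sl2H R, sl2E R⁆ = (2 : R) • sl2E R := by
  ext i j
  fin_cases i <;> fin_cases j <;> simp [sl2H, sl2E, Ring.lie_def, one_add_one_eq_two]

lemma lie_sl2H_sl2F : ⁅sl2H R, sl2F R⁆ = (-2 : R) • sl2F R := by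
  ext i j
  fin_cases i <;> fin_cases j <;> simp [sl2H, sl2F, Ring.lie_def]
  norm_num

lemma lie_sl2E_sl2F : ⁅sl2E R, sl2F R⁆ = sl2H R := by
  ext i j
  fin_cases i <;> fin_cases j <;> simp [sl2E, sl2F, sl2H, Ring.lie_def]

lemma eq_smul_sl2E_add_smul_sl2F_add_smul_sl2H (x : sl (Fin 2) R) :
    x = x.val 0 1 • sl2E R + x.val 1 0 • sl2F R + x.val 0 0 • sl2H R := by
  have htr : Matrix.trace x.val = 0 := x.2
  rw [Matrix.trace_fin_two] at htr
  ext i j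
  fin_cases i <;> fin_cases j <;> simp [sl2E, sl2F, sl2H]
  linear_combination htr

end LieAlgebra.SpecialLinear

open LieAlgebra.SpecialLinear in
theorem LieHom.eq_zero_of_sl2_of_anisotropic {K L : Type*} [Field K] [CharZero K] [LieRing L]
    [LieAlgebra K L] (B : LinearMap.BilinForm K L) (hinv : ∀ x y z, B ⁅x, y⁆ z = B x ⁅y, z⁆)
    (haniso : ∀ x, B x x = 0 → x = 0) (φ : sl (Fin 2) K →ₗ⁅K⁆ L) : φ = 0 := by
  have hE : φ (sl2E K) = 0 := eq_zero_of_lie_eq_smul_of_anisotropic B hinv haniso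
    (two_ne_zero (α := K)) (by rw [← LieHom.map_lie, lie_sl2H_sl2E, map_smul])
  have hF : φ (sl2F K) = 0 := eq_zero_of_lie_eq_smul_of_anisotropic B hinv haniso
    (neg_ne_zero.mpr (two_ne_zero (α := K))) (by rw [← LieHom.map_lie, lie_sl2H_sl2F, map_smul])
  have hH : φ (sl2H K) = 0 := by rw [← lie_sl2E_sl2F, LieHom.map_lie, hE, zero_lie]
  ext x
  rw [eq_smul_sl2E_add_smul_sl2F_add_smul_sl2H K x]
  simp [hE, hF, hH]

theorem sl2_to_compact_lie_algebra_trivial_general {L : Type*} [LieRing L] [LieAlgebra ℝ L]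
    (B : L →ₗ[ℝ] L →ₗ[ℝ] ℝ)
    (hinv : ∀ x y z, B ⁅x, y⁆ z = B x ⁅y, z⁆)
    (hpos : ∀ x : L, x ≠ 0 → 0 < B x x)
    (φ : ↥(LieAlgebra.SpecialLinear.sl (Fin 2) ℝ) →ₗ⁅ℝ⁆ L) :
    ∀ x, φ x = 0 := by
  have haniso : ∀ x, B x x = 0 → x = 0 := fun x hx ↦ by_contra fun hne ↦ (hpos x hne).ne' hx
  simp [LieHom.eq_zero_of_sl2_of_anisotropic B hinv haniso φ]

/-- A real Lie algebra carrying a positive definite invariant symmetric bilinear form admits no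
nonzero Lie algebra homomorphism from `sl(2,ℝ)`. -/
theorem sl2_to_compact_lie_algebra_trivial {L : Type*} [LieRing L] [LieAlgebra ℝ L]
    (B : L →ₗ[ℝ] L →ₗ[ℝ] ℝ)
    (hsymm : ∀ x y, B x y = B y x)
    (hinv : ∀ x y z, B ⁅x, y⁆ z = B x ⁅y, z⁆)
    (hpos : ∀ x : L, x ≠ 0 → 0 < B x x)
    (φ : ↥(LieAlgebra.SpecialLinear.sl (Fin 2) ℝ) →ₗ⁅ℝ⁆ L) :
    ∀ x, φ x = 0 :=
  sl2_to_compact_lie_algebra_trivial_general B hinv hpos φ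
end

section
/- Fix n ≥ 1. Let Pin⁺ₙ (resp. Pin⁻ₙ) be the subgroup of the group of units of the real Clifford algebra Cl(Qₙ) (resp. Cl(−Qₙ)) generated by the images ι(v) of the unit vectors v ∈ ℝⁿ (those with x₁²+⋯+xₙ² = 1), where Qₙ(x) = x₁²+⋯+xₙ². Both groups contain the central scalar −1. Let 𝕋 be the circle group of unit complex numbers. Then the quotient groups (Pin⁺ₙ × 𝕋)/⟨(−1,−1)⟩ and (Pin⁻ₙ × 𝕋)/⟨(−1,−1)⟩ are isomorphic, where ⟨(−1,−1)⟩ denotes the central subgroup of order two generated by the pair (−1,−1). -/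
noncomputable section

/-- The standard positive definite quadratic form `Qₙ(x) = x₁² + ⋯ + xₙ²` on `ℝⁿ`. -/
def Qeuc (n : ℕ) : QuadraticForm ℝ (Fin n → ℝ) :=
  QuadraticMap.weightedSumSquares ℝ (fun _ : Fin n => (1 : ℝ))

/-- `Pin⁺ₙ`: the subgroup of the unit group of the Clifford algebra `Cl(Qₙ)` generated by the
images `ι v` of the unit vectors `v`. -/
def PinPlus (n : ℕ) : Subgroup (CliffordAlgebra (Qeuc n))ˣ :=
  Subgroup.closure {u | ∃ v : Fin n → ℝ, Qeuc n v = 1 ∧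
    (u : CliffordAlgebra (Qeuc n)) = CliffordAlgebra.ι (Qeuc n) v}

/-- `Pin⁻ₙ`: the subgroup of the unit group of the Clifford algebra `Cl(−Qₙ)` generated by the
images `ι v` of the unit vectors `v`. -/
def PinMinus (n : ℕ) : Subgroup (CliffordAlgebra (-Qeuc n))ˣ :=
  Subgroup.closure {u | ∃ v : Fin n → ℝ, Qeuc n v = 1 ∧
    (u : CliffordAlgebra (-Qeuc n)) = CliffordAlgebra.ι (-Qeuc n) v}

/-- The central subgroup `⟨(−1,−1)⟩` of `Pin⁺ₙ × 𝕋`. -/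
def ZPlus (n : ℕ) : Subgroup (↥(PinPlus n) × Circle) :=
  Subgroup.closure {x | ((x.1 : (CliffordAlgebra (Qeuc n))ˣ) = -1) ∧ ((x.2 : ℂ) = -1)}

/-- The central subgroup `⟨(−1,−1)⟩` of `Pin⁻ₙ × 𝕋`. -/
def ZMinus (n : ℕ) : Subgroup (↥(PinMinus n) × Circle) :=
  Subgroup.closure {x | ((x.1 : (CliffordAlgebra (-Qeuc n))ˣ) = -1) ∧ ((x.2 : ℂ) = -1)}

theorem closure_of_central_normal {G : Type*} [Group G] {S : Set G}
    (hS : S ⊆ (Subgroup.center G : Set G)) : (Subgroup.closure S).Normal := by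
  constructor
  intro x hx g
  have h := Subgroup.mem_center_iff.mp
    ((Subgroup.closure_le (Subgroup.center G)).mpr hS hx) g
  rw [h, mul_inv_cancel_right]
  exact hx

instance (n : ℕ) : (ZPlus n).Normal := by
  apply closure_of_central_normal
  rintro ⟨a, b⟩ ⟨ha, hb⟩
  simp only [SetLike.mem_coe, Subgroup.mem_center_iff]
  rintro ⟨c, d⟩
  refine Prod.ext ?_ (mul_comm _ _)
  · refine Subtype.ext ?_
    show (c : (CliffordAlgebra (Qeuc n))ˣ) * a = (a : (CliffordAlgebra (Qeuc n))ˣ) * c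
    rw [ha, mul_neg_one, neg_one_mul]

instance (n : ℕ) : (ZMinus n).Normal := by
  apply closure_of_central_normal
  rintro ⟨a, b⟩ ⟨ha, hb⟩
  simp only [SetLike.mem_coe, Subgroup.mem_center_iff]
  rintro ⟨c, d⟩
  refine Prod.ext ?_ (mul_comm _ _)
  · refine Subtype.ext ?_
    show (c : (CliffordAlgebra (-Qeuc n))ˣ) * a = (a : (CliffordAlgebra (-Qeuc n))ˣ) * c
    rw [ha, mul_neg_one, neg_one_mul]

/-!
Complexification forgets the sign of a quadratic form: `ι v ↦ i ⊗ ι v` extends to an isomorphism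
`ℂ ⊗ Cl(Q) ≃ ℂ ⊗ Cl(-Q)` of `ℂ`-algebras, with inverse `ι v ↦ -i ⊗ ι v`. For a subgroup `P` of
`Aˣ`, the map `(u, z) ↦ z ⊗ u` from `P × 𝕋` to `(ℂ ⊗ A)ˣ` has kernel `⟨(-1, -1)⟩`, because
`z ⊗ u = 1` forces `z` to be real. So `(Pin^± × 𝕋)/⟨(-1, -1)⟩` is the subgroup of
`(ℂ ⊗ Cl(±Q))ˣ` generated by the circle and the `1 ⊗ ι v`, and the isomorphism carries one of
these subgroups onto the other because it sends `1 ⊗ ι v` to `i ⊗ ι v`.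
-/

open TensorProduct

def QuotientGroup.equivOfRangeEq {G H K : Type*} [Group G] [Group H] [Group K]
    {M : Subgroup G} {N : Subgroup H} [M.Normal] [N.Normal] (f : G →* K) (g : H →* K)
    (hf : f.ker = M) (hg : g.ker = N) (h : f.range = g.range) : G ⧸ M ≃* H ⧸ N :=
  (QuotientGroup.quotientMulEquivOfEq hf.symm).trans <|
    (QuotientGroup.quotientKerEquivRange f).trans <| (MulEquiv.subgroupCongr h).trans <|
      (QuotientGroup.quotientKerEquivRange g).symm.trans (QuotientGroup.quotientMulEquivOfEq hg)

theorem smul_eq_smul_of_tmul_eq_tmul {M : Type*} [AddCommGroup M] [Module ℝ M]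
    (f : ℂ →ₗ[ℝ] ℝ) {z w : ℂ} {a b : M} (h : z ⊗ₜ[ℝ] a = w ⊗ₜ[ℝ] b) : f z • a = f w • b := by
  simpa using congrArg ((TensorProduct.lid ℝ M).toLinearMap ∘ₗ f.rTensor M) h

section CircleTensor

variable {A : Type*} [Ring A] [Algebra ℝ A]

theorem eq_one_or_eq_neg_one_of_tmul_eq_one [Nontrivial A] {z : Circle} {u : Aˣ}
    (h : (z : ℂ) ⊗ₜ[ℝ] (u : A) = 1) : (z = 1 ∧ u = 1) ∨ (z = -1 ∧ u = -1) := by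
  rw [Algebra.TensorProduct.one_def] at h
  have him : (z : ℂ).im = 0 := by
    simpa [u.ne_zero] using smul_eq_smul_of_tmul_eq_tmul Complex.imLm h
  have hre : (z : ℂ).re • (u : A) = 1 := by
    simpa using smul_eq_smul_of_tmul_eq_tmul Complex.reLm h
  have hz : (z : ℂ) = (z : ℂ).re := Complex.ext rfl (by simp [him])
  have habs : |(z : ℂ).re| = 1 := by
    rw [← Real.norm_eq_abs, ← Complex.norm_real, ← hz, Circle.norm_coe]
  rcases abs_eq zero_le_one |>.mp habs with h1 | h1
  · left
    exact ⟨Circle.ext (by rw [hz, h1]; simp), Units.ext (by simpa [h1] using hre)⟩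
  · right
    refine ⟨Circle.ext (by rw [hz, h1]; simp), Units.ext ?_⟩
    rw [h1, neg_one_smul, neg_eq_iff_eq_neg] at hre
    simpa using hre

def circleTensorHom (P : Subgroup Aˣ) : P × Circle →* (ℂ ⊗[ℝ] A)ˣ :=
  ((Units.map (Algebra.TensorProduct.includeRight : A →ₐ[ℝ] ℂ ⊗[ℝ] A).toMonoidHom).comp
    P.subtype).noncommCoprod
    ((Units.map (algebraMap ℂ (ℂ ⊗[ℝ] A)).toMonoidHom).comp Circle.toUnits)
    fun _ _ => Units.ext (Algebra.commutes _ _).symm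

theorem circleTensorHom_apply (P : Subgroup Aˣ) (x : P × Circle) :
    (circleTensorHom P x : ℂ ⊗[ℝ] A) = (x.2 : ℂ) ⊗ₜ ((x.1 : Aˣ) : A) := by
  simp [circleTensorHom, Algebra.TensorProduct.algebraMap_apply,
    Algebra.TensorProduct.tmul_mul_tmul]

theorem ker_circleTensorHom [Nontrivial A] (P : Subgroup Aˣ) :
    (circleTensorHom P).ker = Subgroup.closure {x | (x.1 : Aˣ) = -1 ∧ (x.2 : ℂ) = -1} := by
  refine le_antisymm (fun x hx => ?_) ((Subgroup.closure_le _).2 fun x ⟨h1, h2⟩ => ?_)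
  · have hx' : (x.2 : ℂ) ⊗ₜ[ℝ] ((x.1 : Aˣ) : A) = 1 := by
      rw [← circleTensorHom_apply, hx, Units.val_one]
    rcases eq_one_or_eq_neg_one_of_tmul_eq_one hx' with ⟨h1, h2⟩ | ⟨h1, h2⟩
    · rw [show x = 1 from Prod.ext (Subtype.ext h2) h1]
      exact one_mem _
    · exact Subgroup.subset_closure ⟨h2, by simp [h1]⟩
  · refine Units.ext ?_
    rw [circleTensorHom_apply, h1, h2, Units.val_neg, Units.val_one, neg_tmul, tmul_neg, neg_neg]
    rfl

end CircleTensor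

namespace CliffordAlgebra

variable {V : Type*} [AddCommGroup V] [Module ℝ V]

def complexTensorNegHom {Q₁ Q₂ : QuadraticForm ℝ V} (h : Q₂ = -Q₁) (c : ℂ) (hc : c * c = -1) :
    ℂ ⊗[ℝ] CliffordAlgebra Q₁ →ₐ[ℂ] ℂ ⊗[ℝ] CliffordAlgebra Q₂ :=
  AlgHom.liftEquiv ℝ ℂ _ _ <| lift Q₁ ⟨TensorProduct.mk ℝ ℂ _ c ∘ₗ ι Q₂, fun v => by
    simp only [LinearMap.comp_apply, mk_apply, Algebra.TensorProduct.tmul_mul_tmul, hc,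
      ι_sq_scalar, h, neg_apply, map_neg, neg_tmul, tmul_neg, neg_neg,
      Algebra.TensorProduct.algebraMap_apply']⟩

theorem complexTensorNegHom_tmul_ι {Q₁ Q₂ : QuadraticForm ℝ V} (h : Q₂ = -Q₁) (c : ℂ)
    (hc : c * c = -1) (z : ℂ) (v : V) :
    complexTensorNegHom h c hc (z ⊗ₜ ι Q₁ v) = (z * c) ⊗ₜ ι Q₂ v := by
  rw [complexTensorNegHom, AlgHom.liftEquiv_tmul, lift_ι_apply, LinearMap.comp_apply, mk_apply,
    smul_tmul', smul_eq_mul]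

theorem complexTensorNegHom_comp {Q₁ Q₂ : QuadraticForm ℝ V} (h : Q₂ = -Q₁) (h' : Q₁ = -Q₂)
    {c c' : ℂ} (hc : c * c = -1) (hc' : c' * c' = -1) (hcc' : c * c' = 1) :
    (complexTensorNegHom h' c' hc').comp (complexTensorNegHom h c hc) = AlgHom.id ℂ _ := by
  ext v
  simp [complexTensorNegHom_tmul_ι, hcc']

def ιUnitsClosure (Q : QuadraticForm ℝ V) (T : Set V) : Subgroup (CliffordAlgebra Q)ˣ :=
  Subgroup.closure {u | ∃ v ∈ T, (u : CliffordAlgebra Q) = ι Q v}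

section ιUnitsClosure

variable {Q : QuadraticForm ℝ V} {T : Set V}

theorem isUnit_ι_mem_ιUnitsClosure {v : V} (hv : v ∈ T) (hQ : IsUnit (Q v)) :
    (isUnit_ι_of_isUnit Q hQ).unit ∈ ιUnitsClosure Q T :=
  Subgroup.subset_closure ⟨v, hv, rfl⟩

theorem neg_one_mem_ιUnitsClosure_of_eq_one {e : V} (he : e ∈ T) (hne : -e ∈ T)
    (hQ : Q e = 1) : -1 ∈ ιUnitsClosure Q T := by
  have hQ' : IsUnit (Q (-e)) := by simp [hQ]
  convert mul_mem (isUnit_ι_mem_ιUnitsClosure he (hQ ▸ isUnit_one))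
    (isUnit_ι_mem_ιUnitsClosure hne hQ')
  ext
  simp [ι_sq_scalar, hQ]

theorem neg_one_mem_ιUnitsClosure_of_eq_neg_one {e : V} (he : e ∈ T) (hQ : Q e = -1) :
    -1 ∈ ιUnitsClosure Q T := by
  have hQ' : IsUnit (Q e) := by simp [hQ]
  convert mul_mem (isUnit_ι_mem_ιUnitsClosure he hQ') (isUnit_ι_mem_ιUnitsClosure he hQ')
  ext
  simp [ι_sq_scalar, hQ]

end ιUnitsClosure

theorem units_map_complexTensorNegHom_mem_range {Q₁ Q₂ : QuadraticForm ℝ V} (T : Set V)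
    (h : Q₂ = -Q₁) (c : Circle) (hc : (c : ℂ) * c = -1) (x : ιUnitsClosure Q₁ T × Circle) :
    Units.map (MonoidHomClass.toMonoidHom (complexTensorNegHom h c hc))
      (circleTensorHom _ x) ∈ (circleTensorHom (ιUnitsClosure Q₂ T)).range := by
  obtain ⟨⟨u, hu⟩, z⟩ := x
  set F := MonoidHomClass.toMonoidHom (complexTensorNegHom h c hc)
  set j := (Units.map F).comp (Units.map (MonoidHomClass.toMonoidHom
    (Algebra.TensorProduct.includeRight : CliffordAlgebra Q₁ →ₐ[ℝ] ℂ ⊗[ℝ] CliffordAlgebra Q₁)))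
  have hgen : ιUnitsClosure Q₁ T ≤ (circleTensorHom (ιUnitsClosure Q₂ T)).range.comap j := by
    refine (Subgroup.closure_le _).2 ?_
    rintro s ⟨v, hv, hs⟩
    have hQ : IsUnit (Q₂ v) := by
      rw [h, neg_apply, IsUnit.neg_iff]
      exact isUnit_of_isUnit_ι Q₁ (hs ▸ s.isUnit)
    refine ⟨(⟨_, isUnit_ι_mem_ιUnitsClosure hv hQ⟩, c), Units.ext ?_⟩
    simp [circleTensorHom_apply, j, F, hs, complexTensorNegHom_tmul_ι]
  have hsplit : Units.map F (circleTensorHom _ (⟨u, hu⟩, z)) =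
      j u * circleTensorHom (ιUnitsClosure Q₂ T) (1, z) := by
    have hz : (z : ℂ) ⊗ₜ[ℝ] (u : CliffordAlgebra Q₁) =
        1 ⊗ₜ (u : CliffordAlgebra Q₁) * algebraMap ℂ _ (z : ℂ) := by
      rw [Algebra.TensorProduct.algebraMap_apply, Algebra.TensorProduct.tmul_mul_tmul, one_mul,
        mul_one, Algebra.algebraMap_self_apply]
    refine Units.ext ?_
    simp only [Units.val_mul, circleTensorHom_apply, MonoidHom.comp_apply, Units.coe_map,
      MonoidHom.coe_coe, j, F]
    rw [hz, map_mul, AlgHom.commutes]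
    rfl
  rw [hsplit]
  exact mul_mem (hgen hu) ⟨_, rfl⟩

def circleTensorNegHom (Q : QuadraticForm ℝ V) (T : Set V) :
    ιUnitsClosure Q T × Circle →* (ℂ ⊗[ℝ] CliffordAlgebra (-Q))ˣ :=
  (Units.map (MonoidHomClass.toMonoidHom
    (complexTensorNegHom rfl Complex.I Complex.I_mul_I))).comp (circleTensorHom _)

theorem ker_circleTensorNegHom (Q : QuadraticForm ℝ V) (T : Set V) :
    (circleTensorNegHom Q T).ker = (circleTensorHom (ιUnitsClosure Q T)).ker := by
  refine MonoidHom.ker_comp_of_injective _ _ (Units.map_injective ?_)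
  exact Function.LeftInverse.injective (DFunLike.congr_fun (complexTensorNegHom_comp (Q₁ := Q)
    rfl (neg_neg Q).symm Complex.I_mul_I (c' := -Complex.I) (by simp) (by simp)))

theorem range_circleTensorNegHom (Q : QuadraticForm ℝ V) (T : Set V) :
    (circleTensorNegHom Q T).range = (circleTensorHom (ιUnitsClosure (-Q) T)).range := by
  let i : Circle := ⟨Complex.I, by simp [Submonoid.unitSphere]⟩
  have hi : (i : ℂ) = Complex.I := rfl
  refine le_antisymm ?_ fun y ⟨x, hx⟩ => ?_
  · rintro _ ⟨x, rfl⟩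
    exact units_map_complexTensorNegHom_mem_range T rfl i Complex.I_mul_I x
  · obtain ⟨x', hx'⟩ := units_map_complexTensorNegHom_mem_range (Q₁ := -Q) (Q₂ := Q) T
      (neg_neg Q).symm (-i) (by simp [hi]) x
    refine ⟨x', Units.ext ?_⟩
    rw [circleTensorNegHom, MonoidHom.comp_apply, hx', ← hx]
    exact DFunLike.congr_fun (complexTensorNegHom_comp (Q₁ := -Q) (neg_neg Q).symm rfl
      (c := ((-i : Circle) : ℂ)) _ Complex.I_mul_I (by simp [hi])) _

end CliffordAlgebra

theorem Qeuc_single_one {n : ℕ} (i : Fin n) : Qeuc n (Pi.single i 1) = 1 := by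
  simp [Qeuc, QuadraticMap.weightedSumSquares_apply, Pi.single_apply]

/-- The groups `Pin⁺ₙ` and `Pin⁻ₙ` both contain the central scalar `−1`, and the quotients
`(Pin⁺ₙ × 𝕋)/⟨(−1,−1)⟩` and `(Pin⁻ₙ × 𝕋)/⟨(−1,−1)⟩` are isomorphic groups. -/
theorem pinc_plus_iso_pinc_minus (n : ℕ) (hn : 1 ≤ n) :
    ((-1 : (CliffordAlgebra (Qeuc n))ˣ) ∈ PinPlus n) ∧
    ((-1 : (CliffordAlgebra (-Qeuc n))ˣ) ∈ PinMinus n) ∧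
    Nonempty (((↥(PinPlus n) × Circle) ⧸ ZPlus n) ≃* ((↥(PinMinus n) × Circle) ⧸ ZMinus n)) := by
  have he := Qeuc_single_one (⟨0, hn⟩ : Fin n)
  have hne : Qeuc n (-Pi.single ⟨0, hn⟩ 1) = 1 := ((Qeuc n).map_neg _).trans he
  refine ⟨CliffordAlgebra.neg_one_mem_ιUnitsClosure_of_eq_one he hne he,
    CliffordAlgebra.neg_one_mem_ιUnitsClosure_of_eq_neg_one (Q := -Qeuc n) he (by simp [he]), ⟨?_⟩⟩
  have hker := (CliffordAlgebra.ker_circleTensorNegHom (Qeuc n) {v | Qeuc n v = 1}).trans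
    (ker_circleTensorHom _)
  exact QuotientGroup.equivOfRangeEq _ _ hker (ker_circleTensorHom _)
    (CliffordAlgebra.range_circleTensorNegHom _ _)

end
end
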